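/- arXiv:1907.04458 — 2 statements merged into one kernel-verified Lean document; each statement's English description precedes it below -/
import Mathlib

section
/- Let (a_n) be a sequence of reals with a_n ≥ 1 for all n, and let k be a positive natural number. Then liminf_{n→∞} a_{n+k}/a_n ≤ (limsup_{n→∞} a_n^{1/n})^k, provided limsup_{n→∞} a_n^{1/n} is finite. -/
/-!
If `c < liminf a (n + k) / a n`, then eventually `c * a n ≤ a (n + k)`, so along the progression
`n = N + m k` the sequence grows at least like `c ^ m`. Hence `a n ^ (1 / n) ≥ c ^ (m / (N + m k))`
there, and this exponent tends to `1 / k`, giving `c ^ (1 / k) ≤ limsup a n ^ (1 / n)`.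
-/

open Filter Topology

theorem le_limsup_of_tendsto_of_le_comp {ι κ α : Type*} [ConditionallyCompleteLinearOrder α]
    [TopologicalSpace α] [OrderTopology α] [DenselyOrdered α] {f : Filter ι} [f.NeBot]
    {g : Filter κ} {v : ι → κ} {w : ι → α} {r : κ → α} {d : α} (hv : Tendsto v f g)
    (hw : Tendsto w f (𝓝 d)) (hwr : ∀ i, w i ≤ r (v i)) (hr : IsBoundedUnder (· ≤ ·) g r) :
    d ≤ limsup r g :=
  le_of_forall_lt_imp_le_of_dense fun _ hx =>
    le_limsup_of_frequently_le
      (hv.frequently ((hw.eventually (eventually_gt_nhds hx)).mono fun i hi =>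
        hi.le.trans (hwr i)).frequently) hr

theorem pow_mul_le_of_forall_mul_le {R : Type*} [Semiring R] [PartialOrder R] [IsOrderedRing R]
    {a : ℕ → R} {c : R} (hc : 0 ≤ c) {N k : ℕ} (h : ∀ n ≥ N, c * a n ≤ a (n + k)) (m : ℕ) :
    c ^ m * a N ≤ a (N + m * k) := by
  induction m with
  | zero => simp
  | succ m ih =>
    calc c ^ (m + 1) * a N = c * (c ^ m * a N) := by rw [pow_succ', mul_assoc]
      _ ≤ c * a (N + m * k) := mul_le_mul_of_nonneg_left ih hc
      _ ≤ a (N + m * k + k) := h _ (Nat.le_add_right _ _)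
      _ = a (N + (m + 1) * k) := by rw [add_mul, one_mul, add_assoc]

theorem tendsto_natCast_div_add_mul_atTop (N : ℕ) {k : ℕ} (hk : k ≠ 0) :
    Tendsto (fun m : ℕ => (m : ℝ) / ((N + m * k : ℕ) : ℝ)) atTop (𝓝 (k : ℝ)⁻¹) := by
  have hk' : (k : ℝ) ≠ 0 := Nat.cast_ne_zero.2 hk
  have h := (tendsto_natCast_div_add_atTop ((N : ℝ) / k)).const_mul (k : ℝ)⁻¹
  rw [mul_one] at h
  refine h.congr fun m => ?_
  push_cast
  field_simp
  ring

theorem pow_le_limsup_rpow_of_eventually_mul_le {a : ℕ → ℝ} (ha : ∀ n, 1 ≤ a n) {k : ℕ}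
    (hk : k ≠ 0) (hfin : IsBoundedUnder (· ≤ ·) atTop (fun n => a n ^ (1 / (n : ℝ)))) {c : ℝ}
    (hc : 0 ≤ c) (h : ∀ᶠ n in atTop, c * a n ≤ a (n + k)) :
    c ≤ (limsup (fun n => a n ^ (1 / (n : ℝ))) atTop) ^ k := by
  obtain ⟨N, hN⟩ := eventually_atTop.1 h
  have hgeom (m : ℕ) : c ^ m ≤ a (N + m * k) :=
    (le_mul_of_one_le_right (pow_nonneg hc m) (ha N)).trans (pow_mul_le_of_forall_mul_le hc hN m)
  have hroot (m : ℕ) : c ^ ((m : ℝ) / ((N + m * k : ℕ) : ℝ)) ≤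
      a (N + m * k) ^ (1 / ((N + m * k : ℕ) : ℝ)) := by
    rw [div_eq_mul_one_div, Real.rpow_mul hc, Real.rpow_natCast]
    exact Real.rpow_le_rpow (pow_nonneg hc m) (hgeom m) (by positivity)
  have hprog : Tendsto (fun m => N + m * k) atTop atTop :=
    tendsto_atTop_mono (fun m => (Nat.le_mul_of_pos_right m (Nat.pos_of_ne_zero hk)).trans
      (Nat.le_add_left _ _)) tendsto_id
  have hexp : Tendsto (fun m : ℕ => c ^ ((m : ℝ) / ((N + m * k : ℕ) : ℝ))) atTop
      (𝓝 (c ^ ((k : ℝ)⁻¹))) :=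
    tendsto_const_nhds.rpow (tendsto_natCast_div_add_mul_atTop N hk) (Or.inr (by positivity))
  calc c = (c ^ ((k : ℝ)⁻¹)) ^ k := (Real.rpow_inv_natCast_pow hc hk).symm
    _ ≤ _ := pow_le_pow_left₀ (by positivity)
      (le_limsup_of_tendsto_of_le_comp hprog hexp hroot hfin) k

theorem stmt_1 (a : ℕ → ℝ) (ha : ∀ n, 1 ≤ a n) (k : ℕ) (hk : 0 < k)
    (hfin : IsBoundedUnder (· ≤ ·) atTop (fun n => a n ^ (1 / (n : ℝ)))) :
    liminf (fun n => a (n + k) / a n) atTop ≤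
      (limsup (fun n => a n ^ (1 / (n : ℝ))) atTop) ^ k := by
  have hpos (n : ℕ) : 0 < a n := one_pos.trans_le (ha n)
  have hL : 0 ≤ limsup (fun n => a n ^ (1 / (n : ℝ))) atTop :=
    le_limsup_of_frequently_le (Frequently.of_forall fun n => Real.rpow_nonneg (hpos n).le _) hfin
  refine le_of_forall_lt_imp_le_of_dense fun c hc => ?_
  rcases lt_or_ge c 0 with hc0 | hc0
  · exact hc0.le.trans (pow_nonneg hL k)
  have hratio : ∀ᶠ n in atTop, c < a (n + k) / a n :=
    eventually_lt_of_lt_liminf hc (isBoundedUnder_of ⟨0, fun n => (div_pos (hpos _) (hpos _)).le⟩)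
  exact pow_le_limsup_rpow_of_eventually_mul_le ha hk.ne' hfin hc0
    (hratio.mono fun n hn => ((lt_div_iff₀ (hpos n)).1 hn).le)
end

section
/- Let k be a positive natural, (P_n) positive reals, and (S_n) nonnegative reals with S_n ≤ P_n, satisfying S_{n+k} ≥ P_n − S_n for all n, and suppose P_{n+k}/P_n ≤ C for all n with C ≥ 1. Then limsup_{n→∞} S_n/P_n ≥ 1/(1+C). -/
/-! If `S n / P n` and `S (n + k) / P (n + k)` were both below `1 / (1 + C)`, then
`P n ≤ S n + S (n + k) < (P n + P (n + k)) / (1 + C) ≤ P n`. So among `n` and `n + k` one index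
always reaches the ratio `1 / (1 + C)`, which therefore happens frequently and bounds the limsup. -/

open Filter

lemma one_div_one_add_le_div_or_le_div {C p q s t : ℝ} (hp : 0 < p) (hq : 0 < q)
    (hqp : q ≤ C * p) (hst : p - s ≤ t) :
    1 / (1 + C) ≤ s / p ∨ 1 / (1 + C) ≤ t / q := by
  have hC : 0 < 1 + C := by nlinarith
  by_contra! h
  obtain ⟨hs, ht⟩ := h
  rw [div_lt_iff₀ hp, one_div_mul_eq_div, lt_div_iff₀ hC] at hs
  rw [div_lt_iff₀ hq, one_div_mul_eq_div, lt_div_iff₀ hC] at ht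
  nlinarith

lemma Filter.frequently_atTop_of_or_add {p : ℕ → Prop} (k : ℕ) (h : ∀ n, p n ∨ p (n + k)) :
    ∃ᶠ n in atTop, p n :=
  frequently_atTop.2 fun n => (h n).elim (fun hn => ⟨n, le_rfl, hn⟩)
    (fun hnk => ⟨n + k, Nat.le_add_right n k, hnk⟩)

theorem stmt_19_general (k : ℕ) (P S : ℕ → ℝ)
    (hP : ∀ n, 0 < P n) (hSP : ∀ n, S n ≤ P n)
    (hrec : ∀ n, S (n + k) ≥ P n - S n)
    (C : ℝ) (hratio : ∀ n, P (n + k) / P n ≤ C) :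
    limsup (fun n => S n / P n) atTop ≥ 1 / (1 + C) := by
  have hreach : ∀ n, 1 / (1 + C) ≤ S n / P n ∨ 1 / (1 + C) ≤ S (n + k) / P (n + k) := fun n =>
    one_div_one_add_le_div_or_le_div (hP n) (hP (n + k))
      ((div_le_iff₀ (hP n)).1 (hratio n)) (hrec n)
  have hbdd : IsBoundedUnder (· ≤ ·) atTop (fun n => S n / P n) :=
    isBoundedUnder_of ⟨1, fun n => (div_le_one (hP n)).2 (hSP n)⟩
  exact le_limsup_of_frequently_le (frequently_atTop_of_or_add k hreach) hbdd

theorem stmt_19 (k : ℕ) (hk : 0 < k) (P S : ℕ → ℝ)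
    (hP : ∀ n, 0 < P n) (hS : ∀ n, 0 ≤ S n) (hSP : ∀ n, S n ≤ P n)
    (hrec : ∀ n, S (n + k) ≥ P n - S n)
    (C : ℝ) (hC : 1 ≤ C) (hratio : ∀ n, P (n + k) / P n ≤ C) :
    limsup (fun n => S n / P n) atTop ≥ 1 / (1 + C) :=
  stmt_19_general k P S hP hSP hrec C hratio
end
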